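/- For every ξ < ω₁, every infinite M ⊆ ℕ, and every nonempty F ∈ S_ξ with F ⊆ M: ∑_{i∈F} ∑_{n=1}^∞ S^ξ_{M,n}(i) ≤ 6. -/

import Mathlib

noncomputable section

open Filter Set

namespace SchreierPaper

/-- `ω₁`, the first uncountable ordinal. -/
def omega1 : Ordinal := (Cardinal.aleph 1).ord

/-- `E < F` for finite sets of naturals: every element of `E` is smaller than
every element of `F` (this agrees with `max E < min F` under the conventions
`max ∅ = 0`, `min ∅ = ∞`). -/
def BlockLt (E F : Finset ℕ) : Prop := ∀ i ∈ E, ∀ j ∈ F, i < j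

/-- A Schreier system: the hierarchy of Schreier families `S ξ` of finite sets of
positive integers, together with the fixed choice `limSeq` of cofinal sequences at
countable limit ordinals used in the recursive definition. -/
structure SchreierSystem where
  S : Ordinal → Set (Finset ℕ)
  limSeq : Ordinal → ℕ → Ordinal
  zero_def : S 0 = {E : Finset ℕ | E = ∅ ∨ ∃ n : ℕ, 0 < n ∧ E = {n}}
  succ_def : ∀ ξ : Ordinal,
    S (ξ + 1) = {E : Finset ℕ | E = ∅ ∨ ∃ (k : ℕ) (Es : Fin k → Finset ℕ), 0 < k ∧
      (∀ i, (Es i).Nonempty ∧ Es i ∈ S ξ) ∧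
      (∀ i j : Fin k, i < j → BlockLt (Es i) (Es j)) ∧
      (∀ m ∈ E, k ≤ m) ∧ E = Finset.univ.biUnion Es}
  limSeq_lt : ∀ ξ : Ordinal, ξ < omega1 → Order.IsSuccLimit ξ → ∀ n : ℕ, limSeq ξ n < ξ
  limSeq_strictMono : ∀ ξ : Ordinal, ξ < omega1 → Order.IsSuccLimit ξ → StrictMono (limSeq ξ)
  limSeq_cofinal : ∀ ξ : Ordinal, ξ < omega1 → Order.IsSuccLimit ξ → ∀ β < ξ, ∃ n : ℕ, β ≤ limSeq ξ n
  limSeq_nested : ∀ ξ : Ordinal, ξ < omega1 → Order.IsSuccLimit ξ →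
    ∀ n : ℕ, S (limSeq ξ n + 1) ⊆ S (limSeq ξ (n + 1))
  lim_def : ∀ ξ : Ordinal, ξ < omega1 → Order.IsSuccLimit ξ →
    S ξ = {E : Finset ℕ | E = ∅ ∨ (E.Nonempty ∧ ∃ n : ℕ, (∀ m ∈ E, n ≤ m) ∧
      E ∈ S (limSeq ξ n + 1))}

/-- The Schreier norm `‖x‖_ξ` of a finitely supported sequence. -/
def schreierNorm (SS : SchreierSystem) (ξ : Ordinal) (x : ℕ →₀ ℝ) : ℝ :=
  sSup {c : ℝ | ∃ E ∈ SS.S ξ, c = ∑ i ∈ E, |x i|}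

/-- The action of a finitely supported functional (coefficients with respect to the
coordinate functionals) on a finitely supported vector. -/
def pairing (g x : ℕ →₀ ℝ) : ℝ := g.sum fun j c => c * x j

/-- The dual norm of `X_ξ^*` on finitely supported functionals. -/
def dualNorm (SS : SchreierSystem) (ξ : Ordinal) (g : ℕ →₀ ℝ) : ℝ :=
  sSup {c : ℝ | ∃ x : ℕ →₀ ℝ, schreierNorm SS ξ x ≤ 1 ∧ c = |pairing g x|}

/-- The canonical unit vector `e_n` (also used for the coordinate functional `f_n`). -/
def unitVec (n : ℕ) : ℕ →₀ ℝ := Finsupp.single n 1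

/-- A block sequence: nonzero, finitely supported, supported on positive integers,
with successive supports. -/
def IsBlockSeq (x : ℕ → ℕ →₀ ℝ) : Prop :=
  (∀ i, x i ≠ 0) ∧ (∀ i, ∀ a ∈ (x i).support, 0 < a) ∧
    ∀ i, BlockLt (x i).support (x (i + 1)).support

/-- A normalized block sequence in the Schreier space `X_ξ`. -/
def IsNormalizedBlockSeq (SS : SchreierSystem) (ξ : Ordinal) (x : ℕ → ℕ →₀ ℝ) : Prop :=
  IsBlockSeq x ∧ ∀ i, schreierNorm SS ξ (x i) = 1

/-- A normalized block sequence in the dual space `X_ξ^*`. -/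
def IsNormalizedDualBlockSeq (SS : SchreierSystem) (ξ : Ordinal) (x : ℕ → ℕ →₀ ℝ) : Prop :=
  IsBlockSeq x ∧ ∀ i, dualNorm SS ξ (x i) = 1

/-- The linear combination `∑ a_i u_i` for finitely supported scalars `a`. -/
def combo (u : ℕ → ℕ →₀ ℝ) (a : ℕ →₀ ℝ) : ℕ →₀ ℝ := a.sum fun i c => c • u i

/-- Equivalence of two sequences with respect to two (norm) functions. -/
def SeqEquiv (N₁ : (ℕ →₀ ℝ) → ℝ) (u : ℕ → ℕ →₀ ℝ)
    (N₂ : (ℕ →₀ ℝ) → ℝ) (v : ℕ → ℕ →₀ ℝ) : Prop :=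
  ∃ C : ℝ, 1 ≤ C ∧ ∀ a : ℕ →₀ ℝ,
    C⁻¹ * N₂ (combo v a) ≤ N₁ (combo u a) ∧ N₁ (combo u a) ≤ C * N₂ (combo v a)

/-- A `ϱ`-Schreier pair `((x_i), (x*_i))` in `X_ξ × X_ξ^*`. -/
def IsSchreierPair (SS : SchreierSystem) (ξ ϱ : Ordinal) (x xs : ℕ → ℕ →₀ ℝ) : Prop :=
  IsNormalizedBlockSeq SS ξ x ∧ IsNormalizedDualBlockSeq SS ξ xs ∧
  (∀ i j, i ≠ j → pairing (xs i) (x j) = 0) ∧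
  (∀ i, pairing (xs i) (x i) = ∑ j ∈ (xs i).support, |xs i j| * |x i j|) ∧
  (∃ δ : ℝ, 0 < δ ∧ ∀ i, δ ≤ pairing (xs i) (x i)) ∧
  (∃ J : ℕ → ℕ, StrictMono J ∧ (∀ i, 0 < J i) ∧
    SeqEquiv (schreierNorm SS ξ) x (schreierNorm SS ϱ) (fun i => unitVec (J i)) ∧
    SeqEquiv (dualNorm SS ξ) xs (dualNorm SS ϱ) (fun i => unitVec (J i))) ∧
  (∃ C : ℝ, ∀ n : ℕ, ∀ y : ℕ →₀ ℝ,
    schreierNorm SS ξ (∑ i ∈ Finset.range n, pairing (xs i) y • x i) ≤ C * schreierNorm SS ξ y)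

/-- `I(ξ)`: the set of partial sums of the Cantor normal form of `ξ`, characterized as
the ordinals `ι ≤ ξ` that are minimal among the ordinals `ι'` with `ι' + (ξ - ι) = ξ`. -/
def IOrd (ξ : Ordinal) : Set Ordinal :=
  {ι | ι ≤ ξ ∧ ∀ ι' : Ordinal, ι' + (ξ - ι) = ξ → ι ≤ ι'}

/-- `R(ξ) = {ξ - ι : ι ≤ ξ}`: the set of ordinals `ϱ` such that `ι + ϱ = ξ` for some `ι`. -/
def ROrd (ξ : Ordinal) : Set Ordinal := {ϱ | ∃ ι : Ordinal, ι + ϱ = ξ}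

/-- The family `A_n[S_γ]` of unions of at most `n` successive members of `S γ`. -/
def AnS (SS : SchreierSystem) (n : ℕ) (γ : Ordinal) : Set (Finset ℕ) :=
  {E : Finset ℕ | E = ∅ ∨ ∃ (k : ℕ) (Es : Fin k → Finset ℕ), 0 < k ∧ k ≤ n ∧
    (∀ i, (Es i).Nonempty ∧ Es i ∈ SS.S γ) ∧
    (∀ i j : Fin k, i < j → BlockLt (Es i) (Es j)) ∧ E = Finset.univ.biUnion Es}

/-- The `⊆`-maximal members of a family of finite sets. -/
def MAXf (F : Set (Finset ℕ)) : Set (Finset ℕ) := {E | E ∈ F ∧ ∀ G ∈ F, E ⊆ G → E = G}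

/-- `T_ε x*`: the part of a functional with coefficients of absolute value `> ε`. -/
def Ttrunc (ε : ℝ) (g : ℕ →₀ ℝ) : ℕ →₀ ℝ :=
  haveI := Classical.decPred fun j : ℕ => ε < |g j|
  g.filter fun j => ε < |g j|

/-- `R_ε x*`: the part of a functional with coefficients of absolute value `≤ ε`. -/
def Rtrunc (ε : ℝ) (g : ℕ →₀ ℝ) : ℕ →₀ ℝ :=
  haveI := Classical.decPred fun j : ℕ => |g j| ≤ ε
  g.filter fun j => |g j| ≤ ε

/-- A `ξ`-flat block sequence of functionals:
`inf_{ε>0} limsup_i ‖R_ε y*_i‖ > 0`. -/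
def XiFlat (SS : SchreierSystem) (ξ : Ordinal) (y : ℕ → ℕ →₀ ℝ) : Prop :=
  ∃ δ : ℝ, 0 < δ ∧ ∀ ε : ℝ, 0 < ε →
    δ ≤ Filter.limsup (fun i => dualNorm SS ξ (Rtrunc ε (y i))) Filter.atTop

/-- An `ι`-approachable block sequence of functionals. -/
def Approachable (SS : SchreierSystem) (ι : Ordinal) (y : ℕ → ℕ →₀ ℝ) : Prop :=
  ∃ ϑ : ℝ, 0 < ϑ ∧ ∀ β < ι, ∀ n j : ℕ, ∃ i > j,
    (Ttrunc ϑ (y i)).support ∉ (AnS SS n β \ MAXf (AnS SS n β))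

/-- Auxiliary recursion: given the "first average" operation `G` on infinite sets,
produce the sequence of successive averages, each taken on the set with all the
previous supports removed. -/
def iterAvg (G : Set ℕ → (ℕ →₀ ℝ)) (M : Set ℕ) : ℕ → (ℕ →₀ ℝ) := fun n =>
  Nat.strongRec (fun n prev =>
    G (M \ ⋃ (i : ℕ) (h : i < n), ((prev i h).support : Set ℕ))) n

/-- The repeated averages hierarchy `𝕊^ξ_{M,n}` (with `n` running from `0`). -/
def RA (SS : SchreierSystem) (ξ : Ordinal) : Set ℕ → ℕ → (ℕ →₀ ℝ) :=
  Ordinal.limitRecOn (motive := fun _ => Set ℕ → ℕ → (ℕ →₀ ℝ)) ξ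
    (fun M n => Finsupp.single (Nat.nth (· ∈ M) n) (1 : ℝ))
    (fun _ ih M => iterAvg
      (fun N => ((sInf N : ℕ) : ℝ)⁻¹ • ∑ j ∈ Finset.range (sInf N), ih N j) M)
    (fun ξ _ ih M => iterAvg
      (fun N => if h : SS.limSeq ξ (sInf N) + 1 < ξ then ih _ h N 0 else 0) M)

/-- The modified Schreier families `S^M_ξ`, defined with the same fixed cofinal
sequences as the given Schreier system. -/
def SMod (SS : SchreierSystem) (ξ : Ordinal) : Set (Finset ℕ) :=
  Ordinal.limitRecOn (motive := fun _ => Set (Finset ℕ)) ξ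
    {E : Finset ℕ | E = ∅ ∨ ∃ n : ℕ, 0 < n ∧ E = {n}}
    (fun _ ih => {E : Finset ℕ | E = ∅ ∨ ∃ (k : ℕ) (Es : Fin k → Finset ℕ), 0 < k ∧
      (∀ i, (Es i).Nonempty ∧ Es i ∈ ih ∧ ∀ m ∈ Es i, k ≤ m) ∧
      (∀ i j : Fin k, i ≠ j → Disjoint (Es i) (Es j)) ∧ E = Finset.univ.biUnion Es})
    (fun ξ _ ih => {E : Finset ℕ | E = ∅ ∨ (E.Nonempty ∧ ∃ n : ℕ, (∀ m ∈ E, n ≤ m) ∧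
      ∃ h : SS.limSeq ξ n + 1 < ξ, E ∈ ih _ h)})

/-- `τ_ξ(A)`: the least number of successive members of `S ξ` whose union is `A`. -/
def tau (SS : SchreierSystem) (ξ : Ordinal) (A : Finset ℕ) : ℕ :=
  sInf {k : ℕ | ∃ Fs : Fin k → Finset ℕ, (∀ i, Fs i ∈ SS.S ξ) ∧
    (∀ i j : Fin k, i < j → BlockLt (Fs i) (Fs j)) ∧ A = Finset.univ.biUnion Fs}

/-- A map `ψ` defined on an infinite set `L` is `ξ`-injective if
`sup_{F ∈ S ξ} τ_ξ(ψ⁻¹(F)) < ∞` (in particular all these preimages are finite). -/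
def XiInjective (SS : SchreierSystem) (ξ : Ordinal) (L : Set ℕ) (ψ : ℕ → ℕ) : Prop :=
  ∃ C : ℕ, ∀ F ∈ SS.S ξ, ∃ A : Finset ℕ, (↑A = {x ∈ L | ψ x ∈ F}) ∧ tau SS ξ A ≤ C

/-- The sum of the indicator functionals of a finite set. -/
def indicatorFs (s : Finset ℕ) : ℕ →₀ ℝ := ∑ j ∈ s, Finsupp.single j 1

section Operators

variable {X Y : Type*} [NormedAddCommGroup X] [NormedSpace ℝ X]
  [NormedAddCommGroup Y] [NormedSpace ℝ Y]

/-- A strictly singular operator. -/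
def StrictlySingular (T : X →L[ℝ] Y) : Prop :=
  ∀ ε : ℝ, 0 < ε → ∀ Z : Submodule ℝ X, ¬ FiniteDimensional ℝ Z →
    ∃ x ∈ Z, ‖x‖ = 1 ∧ ‖T x‖ < ε

/-- A basic sequence in a normed space. -/
def IsBasicSeq (x : ℕ → X) : Prop :=
  (∀ i, x i ≠ 0) ∧ ∃ K : ℝ, ∀ m n : ℕ, m ≤ n → ∀ a : ℕ → ℝ,
    ‖∑ i ∈ Finset.range m, a i • x i‖ ≤ K * ‖∑ i ∈ Finset.range n, a i • x i‖

/-- An `S_ϱ`-strictly singular operator. -/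
def SSsingular (SS : SchreierSystem) (ϱ : Ordinal) (T : X →L[ℝ] Y) : Prop :=
  ∀ ε : ℝ, 0 < ε → ∀ x : ℕ → X, IsBasicSeq x →
    ∃ F ∈ SS.S ϱ, ∃ v ∈ Submodule.span ℝ {w : X | ∃ i ∈ F, w = x i},
      ‖v‖ = 1 ∧ ‖T v‖ < ε

/-- A compact operator: the image of the unit ball is relatively compact. -/
def CompactOp (T : X →L[ℝ] Y) : Prop :=
  IsCompact (closure (⇑T '' Metric.closedBall 0 1))

/-- A finitely strictly singular operator. -/
def FinitelyStrictlySingular (T : X →L[ℝ] Y) : Prop :=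
  ∀ ε : ℝ, 0 < ε → ∃ n : ℕ, ∀ E : Submodule ℝ X, FiniteDimensional ℝ E →
    Module.finrank ℝ E = n → ∃ x ∈ E, ‖x‖ = 1 ∧ ‖T x‖ < ε

/-- A closed operator ideal on a Banach space: a norm-closed linear subspace of the
bounded operators, stable under two-sided composition with bounded operators. -/
def IsClosedOperatorIdeal (I : Set (X →L[ℝ] X)) : Prop :=
  IsClosed I ∧ (0 : X →L[ℝ] X) ∈ I ∧
  (∀ S T : X →L[ℝ] X, S ∈ I → T ∈ I → S + T ∈ I) ∧
  (∀ (c : ℝ) (T : X →L[ℝ] X), T ∈ I → c • T ∈ I) ∧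
  (∀ A B : X →L[ℝ] X, ∀ T ∈ I, A.comp (T.comp B) ∈ I)

end Operators


section WeakSummingProof

open Finset

variable (SS : SchreierSystem)

/-- The set remaining after removing the supports of the first `n` averages. -/
def tailSet (ξ : Ordinal) (M : Set ℕ) (n : ℕ) : Set ℕ :=
  M \ ⋃ (i : ℕ) (_ : i < n), ((RA SS ξ M i).support : Set ℕ)

@[simp] lemma tailSet_zero (ξ : Ordinal) (M : Set ℕ) : tailSet SS ξ M 0 = M := by
  simp [tailSet]

lemma tailSet_succ (ξ : Ordinal) (M : Set ℕ) (n : ℕ) :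
    tailSet SS ξ M (n + 1) = tailSet SS ξ M n \ ((RA SS ξ M n).support : Set ℕ) := by
  ext x
  simp only [tailSet, Set.mem_diff, Set.mem_iUnion, not_exists, Finset.mem_coe]
  constructor
  · rintro ⟨hxM, hx⟩
    exact ⟨⟨hxM, fun i hi => hx i (by omega)⟩, hx n (by omega)⟩
  · rintro ⟨⟨hxM, hx⟩, hxn⟩
    refine ⟨hxM, fun i hi => ?_⟩
    rcases Nat.lt_succ_iff_lt_or_eq.1 hi with h | rfl
    · exact hx i h
    · exact hxn

lemma tailSet_subset (ξ : Ordinal) (M : Set ℕ) (n : ℕ) : tailSet SS ξ M n ⊆ M :=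
  Set.diff_subset

lemma tailSet_anti (ξ : Ordinal) (M : Set ℕ) {n m : ℕ} (h : n ≤ m) :
    tailSet SS ξ M m ⊆ tailSet SS ξ M n := by
  intro x hx
  simp only [tailSet, Set.mem_diff, Set.mem_iUnion, not_exists, Finset.mem_coe] at hx ⊢
  exact ⟨hx.1, fun i hi => hx.2 i (lt_of_lt_of_le hi h)⟩

lemma tailSet_infinite (ξ : Ordinal) {M : Set ℕ} (hM : M.Infinite) (n : ℕ) :
    (tailSet SS ξ M n).Infinite := by
  induction n with
  | zero => simpa using hM
  | succ n ih => rw [tailSet_succ]; exact ih.diff ((RA SS ξ M n).support.finite_toSet)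

lemma tailSet_pos (ξ : Ordinal) {M : Set ℕ} (hMpos : ∀ m ∈ M, 0 < m) (n : ℕ) :
    ∀ m ∈ tailSet SS ξ M n, 0 < m := fun m hm => hMpos m (tailSet_subset SS ξ M n hm)

lemma iterAvg_eq (G : Set ℕ → (ℕ →₀ ℝ)) (M : Set ℕ) (n : ℕ) :
    iterAvg G M n = G (M \ ⋃ (i : ℕ) (_ : i < n), ((iterAvg G M i).support : Set ℕ)) := by
  unfold iterAvg
  rw [Nat.strongRec_eq]

lemma RA_zero_nth (M : Set ℕ) (n : ℕ) :
    RA SS 0 M n = Finsupp.single (Nat.nth (· ∈ M) n) (1 : ℝ) := by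
  unfold RA
  rw [Ordinal.limitRecOn_zero]

lemma RA_succ_fun (ξ : Ordinal) (M : Set ℕ) : RA SS (ξ + 1) M = iterAvg
    (fun N => ((sInf N : ℕ) : ℝ)⁻¹ • ∑ j ∈ Finset.range (sInf N), RA SS ξ N j) M := by
  unfold RA
  rw [Ordinal.add_one_eq_succ, Ordinal.limitRecOn_succ]

lemma RA_limit_fun {ξ : Ordinal} (h : Order.IsSuccLimit ξ) (M : Set ℕ) : RA SS ξ M = iterAvg
    (fun N => if h' : SS.limSeq ξ (sInf N) + 1 < ξ then RA SS (SS.limSeq ξ (sInf N) + 1) N 0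
      else 0) M := by
  conv_lhs => unfold RA
  rw [Ordinal.limitRecOn_limit _ _ _ _ h]
  rfl
lemma supp_RA_zero {M : Set ℕ} (n : ℕ) :
    ((RA SS 0 M n).support : Set ℕ) = {Nat.nth (· ∈ M) n} := by
  rw [RA_zero_nth]
  rw [Finsupp.support_single_ne_zero _ (one_ne_zero)]
  simp

lemma sInf_tailSet_zero {M : Set ℕ} (hM : M.Infinite) (n : ℕ) :
    sInf (tailSet SS 0 M n) = Nat.nth (· ∈ M) n := by
  haveI := Classical.decPred (· ∈ M)
  have hM' : (setOf (· ∈ M)).Infinite := by exact hM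
  have hT : tailSet SS 0 M n = {x ∈ M | ∀ i < n, x ≠ Nat.nth (· ∈ M) i} := by
    ext x
    simp only [tailSet, Set.mem_diff, Set.mem_iUnion, not_exists, Finset.mem_coe,
      Set.mem_setOf_eq]
    constructor
    · rintro ⟨hxM, hx⟩
      refine ⟨hxM, fun i hi hxi => ?_⟩
      refine hx i hi ?_
      have : x ∈ ((RA SS 0 M i).support : Set ℕ) := by rw [supp_RA_zero]; simp [hxi]
      exact this
    · rintro ⟨hxM, hx⟩
      refine ⟨hxM, fun i hi hmem => ?_⟩
      have : x ∈ ({Nat.nth (· ∈ M) i} : Set ℕ) := by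
        rw [← supp_RA_zero SS i]; exact hmem
      exact hx i hi (by simpa using this)
  have hmem : Nat.nth (· ∈ M) n ∈ tailSet SS 0 M n := by
    rw [hT]
    refine ⟨Nat.nth_mem_of_infinite hM' n, fun i hi hne => ?_⟩
    exact absurd (Nat.nth_injective hM' hne.symm) (by omega)
  have hlb : ∀ x ∈ tailSet SS 0 M n, Nat.nth (· ∈ M) n ≤ x := by
    intro x hx
    rw [hT] at hx
    obtain ⟨hxM, hxi⟩ := hx
    have hc : Nat.nth (· ∈ M) (Nat.count (· ∈ M) x) = x := Nat.nth_count hxM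
    by_cases h : Nat.count (· ∈ M) x < n
    · exact absurd hc.symm (hxi _ h)
    · calc Nat.nth (· ∈ M) n ≤ Nat.nth (· ∈ M) (Nat.count (· ∈ M) x) :=
            (Nat.nth_le_nth hM').2 (by omega)
        _ = x := hc
  exact le_antisymm (Nat.sInf_le hmem) (hlb _ (Nat.sInf_mem ⟨_, hmem⟩))

/-- Uniform presentation: each level's averages are a fixed function of the tail set. -/
lemma exists_pres (ξ : Ordinal) : ∃ G : Set ℕ → (ℕ →₀ ℝ),
    ∀ M : Set ℕ, M.Infinite → ∀ n, RA SS ξ M n = G (tailSet SS ξ M n) := by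
  rcases Ordinal.zero_or_succ_or_isSuccLimit ξ with h0 | ⟨β, hβ⟩ | hlim
  · subst h0
    exact ⟨fun N => Finsupp.single (sInf N) 1, fun M hM n => by
      show _ = Finsupp.single (sInf (tailSet SS 0 M n)) 1
      rw [RA_zero_nth, sInf_tailSet_zero SS hM]⟩
  · have hβ' : ξ = β + 1 := by rw [← hβ, Ordinal.add_one_eq_succ]
    subst hβ'
    refine ⟨fun N => ((sInf N : ℕ) : ℝ)⁻¹ • ∑ j ∈ Finset.range (sInf N), RA SS β N j,
      fun M hM n => ?_⟩
    have h1 : ∀ i, RA SS (β + 1) M i = iterAvg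
        (fun N => ((sInf N : ℕ) : ℝ)⁻¹ • ∑ j ∈ Finset.range (sInf N), RA SS β N j) M i :=
      fun i => by rw [RA_succ_fun]
    rw [h1, iterAvg_eq]
    have : tailSet SS (β + 1) M n
        = M \ ⋃ (i : ℕ) (_ : i < n), ((iterAvg (fun N => ((sInf N : ℕ) : ℝ)⁻¹ •
            ∑ j ∈ Finset.range (sInf N), RA SS β N j) M i).support : Set ℕ) := by
      unfold tailSet
      congr 1
      ext x
      simp only [Set.mem_iUnion]
      exact ⟨fun ⟨i, hi, hx⟩ => ⟨i, hi, by rwa [← h1]⟩, fun ⟨i, hi, hx⟩ => ⟨i, hi, by rwa [h1]⟩⟩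
    rw [this]
  · refine ⟨fun N => if h' : SS.limSeq ξ (sInf N) + 1 < ξ
        then RA SS (SS.limSeq ξ (sInf N) + 1) N 0 else 0, fun M hM n => ?_⟩
    have h1 : ∀ i, RA SS ξ M i = iterAvg
        (fun N => if h' : SS.limSeq ξ (sInf N) + 1 < ξ
          then RA SS (SS.limSeq ξ (sInf N) + 1) N 0 else 0) M i :=
      fun i => by rw [RA_limit_fun SS hlim]
    rw [h1, iterAvg_eq]
    have : tailSet SS ξ M n
        = M \ ⋃ (i : ℕ) (_ : i < n), ((iterAvg (fun N =>
            if h' : SS.limSeq ξ (sInf N) + 1 < ξ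
            then RA SS (SS.limSeq ξ (sInf N) + 1) N 0 else 0) M i).support : Set ℕ) := by
      unfold tailSet
      congr 1
      ext x
      simp only [Set.mem_iUnion]
      exact ⟨fun ⟨i, hi, hx⟩ => ⟨i, hi, by rwa [← h1]⟩, fun ⟨i, hi, hx⟩ => ⟨i, hi, by rwa [h1]⟩⟩
    rw [this]

/-- Shift: the `(k+l)`-th average of `M` is the `l`-th average of the `k`-th tail. -/
lemma RA_shift_and_tail (ξ : Ordinal) {M : Set ℕ} (hM : M.Infinite) (k : ℕ) :
    ∀ l, RA SS ξ M (k + l) = RA SS ξ (tailSet SS ξ M k) l ∧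
      tailSet SS ξ M (k + l) = tailSet SS ξ (tailSet SS ξ M k) l := by
  obtain ⟨G, hG⟩ := exists_pres SS ξ
  intro l
  induction l using Nat.strong_induction_on with
  | _ l IH =>
    have mem_tail : ∀ (N : Set ℕ) (m x), x ∈ tailSet SS ξ N m ↔
        x ∈ N ∧ ∀ i < m, x ∉ (RA SS ξ N i).support := by
      intro N m x
      simp only [tailSet, Set.mem_diff, Set.mem_iUnion, not_exists, Finset.mem_coe]
    have htail : tailSet SS ξ M (k + l) = tailSet SS ξ (tailSet SS ξ M k) l := by
      ext x
      rw [mem_tail, mem_tail, mem_tail]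
      constructor
      · rintro ⟨hxM, hx⟩
        refine ⟨⟨hxM, fun i hi => hx i (by omega)⟩, fun j hj => ?_⟩
        rw [← (IH j hj).1]
        exact hx (k + j) (by omega)
      · rintro ⟨⟨hxM, hx⟩, hx2⟩
        refine ⟨hxM, fun i hi => ?_⟩
        by_cases hik : i < k
        · exact hx i hik
        · have h2 := hx2 (i - k) (by omega)
          rw [← (IH (i - k) (by omega)).1] at h2
          have : k + (i - k) = i := by omega
          rwa [this] at h2
    refine ⟨?_, htail⟩
    rw [hG M hM (k + l), htail, hG (tailSet SS ξ M k) (tailSet_infinite SS ξ hM k) l]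

lemma RA_shift (ξ : Ordinal) {M : Set ℕ} (hM : M.Infinite) (k l : ℕ) :
    RA SS ξ M (k + l) = RA SS ξ (tailSet SS ξ M k) l :=
  (RA_shift_and_tail SS ξ hM k l).1

lemma tailSet_add (ξ : Ordinal) {M : Set ℕ} (hM : M.Infinite) (k l : ℕ) :
    tailSet SS ξ M (k + l) = tailSet SS ξ (tailSet SS ξ M k) l :=
  (RA_shift_and_tail SS ξ hM k l).2
/-! ### Finsupp helpers -/

lemma avg_apply (c : ℝ) (p : ℕ) (f : ℕ → (ℕ →₀ ℝ)) (i : ℕ) :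
    (c • ∑ j ∈ range p, f j) i = c * ∑ j ∈ range p, f j i := by
  rw [Finsupp.smul_apply, Finsupp.finset_sum_apply, smul_eq_mul]

lemma avg_support {c : ℝ} (hc : 0 < c) {p : ℕ} {f : ℕ → ℕ →₀ ℝ}
    (hf : ∀ j ∈ range p, ∀ i, 0 ≤ f j i) :
    (c • ∑ j ∈ range p, f j).support = (range p).biUnion fun j => (f j).support := by
  ext i
  rw [Finsupp.mem_support_iff, avg_apply, Finset.mem_biUnion]
  constructor
  · intro h
    have hs : ∑ j ∈ range p, f j i ≠ 0 := fun h0 => h (by rw [h0, mul_zero])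
    by_contra hcon
    push_neg at hcon
    refine hs (Finset.sum_eq_zero fun j hj => ?_)
    have := hcon j hj
    rwa [Finsupp.notMem_support_iff] at this
  · rintro ⟨j, hj, hji⟩
    rw [Finsupp.mem_support_iff] at hji
    have hpos : 0 < ∑ j ∈ range p, f j i :=
      Finset.sum_pos' (fun j hj => hf j hj i)
        ⟨j, hj, lt_of_le_of_ne (hf j hj i) (Ne.symm hji)⟩
    positivity

/-- Total mass of a finitely supported function. -/
def tmass (x : ℕ →₀ ℝ) : ℝ := ∑ i ∈ x.support, x i

lemma sum_eq_tmass {x : ℕ →₀ ℝ} {s : Finset ℕ} (hs : x.support ⊆ s) :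
    ∑ i ∈ s, x i = tmass x :=
  (Finset.sum_subset hs fun i _ hi => Finsupp.notMem_support_iff.1 hi).symm

lemma sum_le_tmass {x : ℕ →₀ ℝ} (hx : ∀ i, 0 ≤ x i) (F : Finset ℕ) :
    ∑ i ∈ F, x i ≤ tmass x := by
  calc ∑ i ∈ F, x i ≤ ∑ i ∈ F ∪ x.support, x i :=
        Finset.sum_le_sum_of_subset_of_nonneg Finset.subset_union_left fun i _ _ => hx i
    _ = tmass x := sum_eq_tmass Finset.subset_union_right

lemma support_nonempty_of_tmass_one {x : ℕ →₀ ℝ} (hx : tmass x = 1) : x.support.Nonempty := by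
  by_contra h
  rw [Finset.not_nonempty_iff_eq_empty] at h
  rw [tmass, h] at hx
  simpa using hx

/-! ### Initial segments -/

/-- `s` is an initial segment of the set `N`. -/
def ISeg (s : Finset ℕ) (N : Set ℕ) : Prop :=
  ↑s ⊆ N ∧ ∀ x ∈ N, ∀ y ∈ s, x ≤ y → x ∈ s

lemma ISeg.union {s t : Finset ℕ} {N : Set ℕ} (hs : ISeg s N) (ht : ISeg t (N \ ↑s)) :
    ISeg (s ∪ t) N := by
  constructor
  · intro x hx
    rcases Finset.mem_union.1 hx with h | h
    · exact hs.1 h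
    · exact (ht.1 h).1
  · intro x hx y hy hxy
    rcases Finset.mem_union.1 hy with h | h
    · exact Finset.mem_union_left _ (hs.2 x hx y h hxy)
    · by_cases hxs : x ∈ s
      · exact Finset.mem_union_left _ hxs
      · exact Finset.mem_union_right _ (ht.2 x ⟨hx, hxs⟩ y h hxy)

/-! ### The basic invariants -/

structure Pack (ξ : Ordinal) (M : Set ℕ) (n : ℕ) : Prop where
  nonneg : ∀ i, 0 ≤ RA SS ξ M n i
  mass : tmass (RA SS ξ M n) = 1
  iseg : ISeg (RA SS ξ M n).support (tailSet SS ξ M n)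
  card : ξ ≠ 0 → sInf (tailSet SS ξ M n) ≤ (RA SS ξ M n).support.card

lemma sInf_pos {N : Set ℕ} (hN : N.Infinite) (hNpos : ∀ m ∈ N, 0 < m) : 0 < sInf N :=
  hNpos _ (Nat.sInf_mem hN.nonempty)

lemma RA_succ_zero (ξ : Ordinal) (N : Set ℕ) :
    RA SS (ξ + 1) N 0 = ((sInf N : ℕ) : ℝ)⁻¹ • ∑ j ∈ range (sInf N), RA SS ξ N j := by
  have h := RA_succ_fun SS ξ N
  rw [h, iterAvg_eq]
  simp

lemma RA_limit_zero {ξ : Ordinal} (hlim : Order.IsSuccLimit ξ) (N : Set ℕ)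
    (hc : SS.limSeq ξ (sInf N) + 1 < ξ) :
    RA SS ξ N 0 = RA SS (SS.limSeq ξ (sInf N) + 1) N 0 := by
  have h := RA_limit_fun SS hlim N
  rw [h, iterAvg_eq]
  simp only [Nat.not_lt_zero, Set.iUnion_of_empty, Set.iUnion_empty, Set.diff_empty]
  rw [dif_pos hc]

lemma lt_add_one_ord (β : Ordinal) : β < β + 1 := by
  rw [Ordinal.add_one_eq_succ]
  exact Order.lt_succ β

lemma pack_all : ∀ ξ : Ordinal, ξ < omega1 → ∀ M : Set ℕ, M.Infinite → (∀ m ∈ M, 0 < m) →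
    ∀ n, Pack SS ξ M n := by
  intro ξ
  induction ξ using Ordinal.induction with
  | _ ξ IH =>
    intro hξ M hM hMpos n
    have key : ∀ N : Set ℕ, N.Infinite → (∀ m ∈ N, 0 < m) → Pack SS ξ N 0 := by
      intro N hN hNpos
      rcases Ordinal.zero_or_succ_or_isSuccLimit ξ with h0 | ⟨β, hβ⟩ | hlim
      · subst h0
        have h0 : RA SS 0 N 0 = Finsupp.single (sInf N) 1 := by
          rw [RA_zero_nth, ← sInf_tailSet_zero SS hN 0, tailSet_zero]
        have hsupp : (RA SS 0 N 0).support = {sInf N} := by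
          rw [h0, Finsupp.support_single_ne_zero _ one_ne_zero]
        refine ⟨fun i => ?_, ?_, ?_, fun h => absurd rfl h⟩
        · rw [h0, Finsupp.single_apply]
          split <;> norm_num
        · rw [tmass, hsupp, h0]
          simp
        · rw [hsupp, tailSet_zero]
          constructor
          · intro x hx
            simp only [Finset.coe_singleton, Set.mem_singleton_iff] at hx
            subst hx
            exact Nat.sInf_mem hN.nonempty
          · intro x hx y hy hxy
            simp only [Finset.mem_singleton] at hy ⊢
            subst hy
            exact le_antisymm hxy (Nat.sInf_le hx)
      · have hβ2 : ξ = β + 1 := by rw [← hβ, Ordinal.add_one_eq_succ]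
        subst hβ2
        have hβω : β < omega1 := lt_of_le_of_lt (le_self_add (a := β) (b := 1)) hξ
        have IHβ := IH β (lt_add_one_ord β) hβω N hN hNpos
        have hppos : 0 < sInf N := sInf_pos hN hNpos
        have hinv : (0:ℝ) < ((sInf N : ℕ) : ℝ)⁻¹ := by positivity
        have h0 := RA_succ_zero SS β N
        have hsupp : (RA SS (β+1) N 0).support
            = (range (sInf N)).biUnion fun j => (RA SS β N j).support := by
          rw [h0]
          exact avg_support hinv fun j _ i => (IHβ j).nonneg i
        have hseg : ∀ t : ℕ, ISeg ((range t).biUnion fun j => (RA SS β N j).support) N ∧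
            N \ ↑((range t).biUnion fun j => (RA SS β N j).support) = tailSet SS β N t := by
          intro t
          induction t with
          | zero => simp [ISeg]
          | succ t iht =>
            have hbi : ((range (t+1)).biUnion fun j => (RA SS β N j).support)
                = ((range t).biUnion fun j => (RA SS β N j).support)
                  ∪ (RA SS β N t).support := by
              rw [Finset.range_add_one, Finset.biUnion_insert, Finset.union_comm]
            constructor
            · rw [hbi]
              refine ISeg.union iht.1 ?_
              rw [iht.2]
              exact (IHβ t).iseg
            · rw [hbi, tailSet_succ, ← iht.2]
              push_cast
              rw [Set.diff_diff]
        refine ⟨fun i => ?_, ?_, ?_, fun _ => ?_⟩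
        · rw [h0, avg_apply]
          exact mul_nonneg (le_of_lt hinv) (Finset.sum_nonneg fun j _ => (IHβ j).nonneg i)
        · rw [tmass, hsupp]
          have hrw : ∀ i ∈ (range (sInf N)).biUnion (fun j => (RA SS β N j).support),
              RA SS (β+1) N 0 i
                = ((sInf N : ℕ) : ℝ)⁻¹ * ∑ j ∈ range (sInf N), RA SS β N j i :=
            fun i _ => by rw [h0, avg_apply]
          rw [Finset.sum_congr rfl hrw, ← Finset.mul_sum, Finset.sum_comm]
          have hone : ∀ j ∈ range (sInf N),
              ∑ i ∈ (range (sInf N)).biUnion (fun j => (RA SS β N j).support),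
                RA SS β N j i = 1 := fun j hj => by
            rw [sum_eq_tmass (x := RA SS β N j)
              (Finset.subset_biUnion_of_mem (fun j => (RA SS β N j).support) hj), (IHβ j).mass]
          rw [Finset.sum_congr rfl hone]
          rw [Finset.sum_const, Finset.card_range, nsmul_eq_mul, mul_one]
          rw [inv_mul_cancel₀ (by positivity)]
        · rw [hsupp, tailSet_zero]
          exact (hseg (sInf N)).1
        · rw [hsupp, tailSet_zero]
          have hdisj : ∀ j ∈ range (sInf N), ∀ j' ∈ range (sInf N), j ≠ j' →
              Disjoint ((RA SS β N j).support) ((RA SS β N j').support) := by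
            have hkey : ∀ j j' : ℕ, j < j' →
                Disjoint ((RA SS β N j).support) ((RA SS β N j').support) := by
              intro j j' hlt
              rw [Finset.disjoint_left]
              intro a haj haj'
              have h1 : (↑((RA SS β N j').support) : Set ℕ) ⊆ tailSet SS β N j' :=
                (IHβ j').iseg.1
              have h3 := tailSet_anti SS β N (show j + 1 ≤ j' by omega) (h1 haj')
              rw [tailSet_succ] at h3
              exact h3.2 haj
            intro j _ j' _ hne
            rcases lt_or_gt_of_ne hne with h | h
            · exact hkey j j' h
            · exact (hkey j' j h).symm
          rw [Finset.card_biUnion hdisj]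
          calc sInf N = ∑ _j ∈ range (sInf N), 1 := by simp
            _ ≤ ∑ j ∈ range (sInf N), (RA SS β N j).support.card :=
              Finset.sum_le_sum fun j _ =>
                Finset.card_pos.2 (support_nonempty_of_tmass_one (IHβ j).mass)
      · have hγ : SS.limSeq ξ (sInf N) < ξ := SS.limSeq_lt ξ hξ hlim (sInf N)
        have hc : SS.limSeq ξ (sInf N) + 1 < ξ := by
          rw [Ordinal.add_one_eq_succ]
          exact hlim.succ_lt hγ
        have h0 := RA_limit_zero SS hlim N hc
        have hPack := IH (SS.limSeq ξ (sInf N) + 1) hc (hc.trans hξ) N hN hNpos 0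
        have hne : SS.limSeq ξ (sInf N) + 1 ≠ (0 : Ordinal) := by
          rw [Ordinal.add_one_eq_succ]
          exact Ordinal.succ_ne_zero _
        refine ⟨fun i => by rw [h0]; exact hPack.nonneg i,
          by rw [h0]; exact hPack.mass, ?_, fun _ => ?_⟩
        · rw [tailSet_zero, h0]
          have := hPack.iseg
          rwa [tailSet_zero] at this
        · rw [tailSet_zero, h0]
          have := hPack.card hne
          rwa [tailSet_zero] at this
    have hRA : RA SS ξ M n = RA SS ξ (tailSet SS ξ M n) 0 := by
      have := RA_shift SS ξ hM n 0
      rwa [Nat.add_zero] at this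
    have hk := key (tailSet SS ξ M n) (tailSet_infinite SS ξ hM n) (tailSet_pos SS ξ hMpos n)
    refine ⟨fun i => by rw [hRA]; exact hk.nonneg i, by rw [hRA]; exact hk.mass, ?_, fun h => ?_⟩
    · have := hk.iseg
      rw [tailSet_zero, ← hRA] at this
      exact this
    · have := hk.card h
      rw [tailSet_zero, ← hRA] at this
      exact this
/-! ### Minima of tails: monotonicity and doubling -/

lemma sInf_tailSet_mono (ξ : Ordinal) {M : Set ℕ} (hM : M.Infinite) {n m : ℕ} (h : n ≤ m) :
    sInf (tailSet SS ξ M n) ≤ sInf (tailSet SS ξ M m) :=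
  Nat.sInf_le (tailSet_anti SS ξ M h (Nat.sInf_mem (tailSet_infinite SS ξ hM m).nonempty))

lemma supp_lt_next (ξ : Ordinal) {M : Set ℕ} (hM : M.Infinite) (hMpos : ∀ m ∈ M, 0 < m)
    (hξω : ξ < omega1) (n : ℕ) :
    ∀ x ∈ (RA SS ξ M n).support, ∀ y ∈ tailSet SS ξ M (n + 1), x < y := by
  intro x hx y hy
  rw [tailSet_succ] at hy
  by_contra hcon
  push_neg at hcon
  exact hy.2 ((pack_all SS ξ hξω M hM hMpos n).iseg.2 y hy.1 x hx hcon)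

lemma min_add_card_le {s : Finset ℕ} (hs : s.Nonempty) {a : ℕ} (h : ∀ x ∈ s, a ≤ x) :
    a + s.card ≤ s.max' hs + 1 := by
  have hsub : s ⊆ Finset.Icc a (s.max' hs) := fun x hx =>
    Finset.mem_Icc.2 ⟨h x hx, Finset.le_max' s x hx⟩
  have := Finset.card_le_card hsub
  rw [Nat.card_Icc] at this
  have hma : a ≤ s.max' hs := h _ (s.max'_mem hs)
  omega

lemma sInf_tailSet_double (ξ : Ordinal) {M : Set ℕ} (hM : M.Infinite)
    (hMpos : ∀ m ∈ M, 0 < m) (hξω : ξ < omega1) (hξ0 : ξ ≠ 0) (n : ℕ) :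
    2 * sInf (tailSet SS ξ M n) ≤ sInf (tailSet SS ξ M (n + 1)) := by
  have hpack := pack_all SS ξ hξω M hM hMpos n
  have hcard := hpack.card hξ0
  have hpos : 0 < sInf (tailSet SS ξ M n) :=
    sInf_pos (tailSet_infinite SS ξ hM n) (tailSet_pos SS ξ hMpos n)
  have hne : (RA SS ξ M n).support.Nonempty := support_nonempty_of_tmass_one hpack.mass
  have hge : ∀ x ∈ (RA SS ξ M n).support, sInf (tailSet SS ξ M n) ≤ x := fun x hx =>
    Nat.sInf_le (hpack.iseg.1 hx)
  have h1 := min_add_card_le hne hge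
  have h2 : (RA SS ξ M n).support.max' hne < sInf (tailSet SS ξ M (n+1)) :=
    supp_lt_next SS ξ hM hMpos hξω n _ ((RA SS ξ M n).support.max'_mem hne)
      _ (Nat.sInf_mem (tailSet_infinite SS ξ hM (n+1)).nonempty)
  omega

lemma geom_inv_sum_le (g : ℕ → ℕ) (h1 : ∀ t, 0 < g t) (hd : ∀ t, 2 * g t ≤ g (t + 1)) (T : ℕ) :
    ∑ t ∈ range T, ((g t : ℕ) : ℝ)⁻¹ ≤ 2 * ((g 0 : ℕ) : ℝ)⁻¹ := by
  induction T generalizing g with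
  | zero => simp
  | succ T IH =>
    rw [Finset.sum_range_succ']
    have hIH := IH (fun t => g (t + 1)) (fun t => h1 (t + 1)) (fun t => hd (t + 1))
    have h0 : (0:ℝ) < ((g 0 : ℕ) : ℝ) := by exact_mod_cast h1 0
    have hg1 : ((g 1 : ℕ) : ℝ)⁻¹ ≤ (2 * ((g 0 : ℕ) : ℝ))⁻¹ := by
      refine inv_anti₀ (by linarith) ?_
      have := hd 0
      push_cast
      exact_mod_cast this
    calc ∑ t ∈ range T, ((g (t + 1) : ℕ) : ℝ)⁻¹ + ((g 0 : ℕ) : ℝ)⁻¹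
        ≤ 2 * ((g 1 : ℕ) : ℝ)⁻¹ + ((g 0 : ℕ) : ℝ)⁻¹ := by linarith [hIH]
      _ ≤ 2 * (2 * ((g 0 : ℕ) : ℝ))⁻¹ + ((g 0 : ℕ) : ℝ)⁻¹ := by linarith [hg1]
      _ = 2 * ((g 0 : ℕ) : ℝ)⁻¹ := by
          rw [mul_inv]
          ring

/-! ### Concatenation at successor levels -/

/-- `cIdx β M n` : the index, in the level-`β` sequence of averages of `M`, where the
`n`-th level-`β+1` average of `M` starts. -/
def cIdx (β : Ordinal) (M : Set ℕ) : ℕ → ℕ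
  | 0 => 0
  | n + 1 => cIdx β M n + sInf (tailSet SS (β + 1) M n)

lemma tail_concat (β : Ordinal) {M : Set ℕ} (hM : M.Infinite) (hMpos : ∀ m ∈ M, 0 < m)
    (hβω : β < omega1) :
    ∀ n, tailSet SS (β + 1) M n = tailSet SS β M (cIdx SS β M n) := by
  intro n
  induction n with
  | zero => simp [cIdx]
  | succ n ih =>
    have hT : (tailSet SS (β+1) M n).Infinite := tailSet_infinite SS (β+1) hM n
    have hTpos := tailSet_pos SS (β+1) hMpos (n := n)
    rw [tailSet_succ, ih]
    have hRA : RA SS (β+1) M n = RA SS (β+1) (tailSet SS (β+1) M n) 0 := by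
      have := RA_shift SS (β+1) hM n 0
      rwa [Nat.add_zero] at this
    have hsupp : (RA SS (β+1) (tailSet SS (β+1) M n) 0).support
        = (range (sInf (tailSet SS (β+1) M n))).biUnion
            fun j => (RA SS β (tailSet SS (β+1) M n) j).support := by
      rw [RA_succ_zero]
      refine avg_support ?_ fun j _ i => (pack_all SS β hβω _ hT hTpos j).nonneg i
      have : 0 < sInf (tailSet SS (β+1) M n) := sInf_pos hT hTpos
      positivity
    rw [hRA, hsupp, ih]
    show tailSet SS β M (cIdx SS β M n) \ _ = _
    have hcomp : tailSet SS β M (cIdx SS β M n + sInf (tailSet SS (β+1) M n))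
        = tailSet SS β (tailSet SS β M (cIdx SS β M n)) (sInf (tailSet SS (β+1) M n)) :=
      tailSet_add SS β hM _ _
    rw [show cIdx SS β M (n+1) = cIdx SS β M n + sInf (tailSet SS (β+1) M n) from rfl, hcomp]
    have hmem : ∀ (W : Set ℕ) (p : ℕ), tailSet SS β W p
        = W \ ⋃ (j : ℕ) (_ : j < p), ((RA SS β W j).support : Set ℕ) := fun W p => rfl
    rw [hmem]
    congr 1
    rw [ih]
    ext x
    simp only [Finset.coe_biUnion, Finset.mem_coe, Finset.mem_range, Set.mem_iUnion,
      Finset.mem_coe]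
    constructor
    · rintro ⟨j, hj, hx⟩
      exact ⟨j, hj, hx⟩
    · rintro ⟨j, hj, hx⟩
      exact ⟨j, hj, hx⟩

/-- The level-`β+1` averages written in terms of the global level-`β` averages. -/
lemma RA_succ_apply (β : Ordinal) {M : Set ℕ} (hM : M.Infinite) (hMpos : ∀ m ∈ M, 0 < m)
    (hβω : β < omega1) (n : ℕ) (i : ℕ) :
    RA SS (β + 1) M n i = ((sInf (tailSet SS (β+1) M n) : ℕ) : ℝ)⁻¹ *
      ∑ j ∈ range (sInf (tailSet SS (β+1) M n)), RA SS β M (cIdx SS β M n + j) i := by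
  have hRA : RA SS (β+1) M n = RA SS (β+1) (tailSet SS (β+1) M n) 0 := by
    have := RA_shift SS (β+1) hM n 0
    rwa [Nat.add_zero] at this
  rw [hRA, RA_succ_zero, avg_apply]
  congr 1
  refine Finset.sum_congr rfl fun j _ => ?_
  rw [tail_concat SS β hM hMpos hβω n, ← RA_shift SS β hM]
lemma sum_range_add_split (f : ℕ → ℝ) (a b : ℕ) :
    ∑ n ∈ range (a + b), f n = ∑ n ∈ range a, f n + ∑ t ∈ range b, f (a + t) := by
  induction b with
  | zero => simp
  | succ b ih =>
    rw [show a + (b+1) = (a+b) + 1 from rfl, Finset.sum_range_succ, ih,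
      Finset.sum_range_succ]
    ring

lemma succ_lt_omega1 {β : Ordinal} (h : β < omega1) : β + 1 < omega1 := by
  have hl : Order.IsSuccLimit ((Cardinal.aleph 1).ord) :=
    Cardinal.isSuccLimit_ord (Cardinal.aleph0_le_aleph 1)
  rw [omega1] at h ⊢
  rw [Ordinal.add_one_eq_succ]
  exact hl.succ_lt h

/-- The crucial "far" estimate: the whole level-`β+1` series over any set `W`, applied to a
set `G` whose level-`β` partial series are bounded by `6`, is at most `6 / sInf W`. -/
lemma far_bound (β : Ordinal) {W : Set ℕ} (hW : W.Infinite) (hWpos : ∀ m ∈ W, 0 < m)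
    (hβω : β < omega1) (G : Finset ℕ)
    (HIH : ∀ T' : ℕ, ∑ m ∈ range T', ∑ i ∈ G, RA SS β W m i ≤ 6) (T : ℕ) :
    ∑ t ∈ range T, ∑ i ∈ G, RA SS (β + 1) W t i ≤ 6 * ((sInf W : ℕ) : ℝ)⁻¹ := by
  have pk := pack_all SS β hβω W hW hWpos
  set g : ℕ → ℝ := fun m => ∑ i ∈ G, RA SS β W m i with hg
  have hgnn : ∀ m, 0 ≤ g m := fun m => Finset.sum_nonneg fun i _ => (pk m).nonneg i
  have hWpos' : 0 < sInf W := sInf_pos hW hWpos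
  have hπ : ∀ t : ℕ, sInf W ≤ sInf (tailSet SS (β+1) W t) := by
    intro t
    have := sInf_tailSet_mono SS (β+1) hW (Nat.zero_le t)
    rwa [tailSet_zero] at this
  have hterm : ∀ t : ℕ, ∑ i ∈ G, RA SS (β+1) W t i
      = ((sInf (tailSet SS (β+1) W t) : ℕ) : ℝ)⁻¹ *
        ∑ j ∈ range (sInf (tailSet SS (β+1) W t)), g (cIdx SS β W t + j) := by
    intro t
    have : ∀ i ∈ G, RA SS (β+1) W t i = ((sInf (tailSet SS (β+1) W t) : ℕ) : ℝ)⁻¹ *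
        ∑ j ∈ range (sInf (tailSet SS (β+1) W t)), RA SS β W (cIdx SS β W t + j) i :=
      fun i _ => RA_succ_apply SS β hW hWpos hβω t i
    rw [Finset.sum_congr rfl this, ← Finset.mul_sum, Finset.sum_comm]
  have hblocks : ∀ T' : ℕ, ∑ m ∈ range (cIdx SS β W T'), g m
      = ∑ t ∈ range T', ∑ j ∈ range (sInf (tailSet SS (β+1) W t)), g (cIdx SS β W t + j) := by
    intro T'
    induction T' with
    | zero => simp [cIdx]
    | succ T' ih =>
      rw [show cIdx SS β W (T' + 1) = cIdx SS β W T' + sInf (tailSet SS (β+1) W T') from rfl,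
        sum_range_add_split, ih, Finset.sum_range_succ]
  calc ∑ t ∈ range T, ∑ i ∈ G, RA SS (β+1) W t i
      ≤ ∑ t ∈ range T, ((sInf W : ℕ) : ℝ)⁻¹ *
          ∑ j ∈ range (sInf (tailSet SS (β+1) W t)), g (cIdx SS β W t + j) := by
        refine Finset.sum_le_sum fun t _ => ?_
        rw [hterm t]
        refine mul_le_mul_of_nonneg_right ?_ (Finset.sum_nonneg fun j _ => hgnn _)
        refine inv_anti₀ (by positivity) ?_
        exact_mod_cast hπ t
    _ = ((sInf W : ℕ) : ℝ)⁻¹ * ∑ m ∈ range (cIdx SS β W T), g m := by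
        rw [← Finset.mul_sum, hblocks]
    _ ≤ ((sInf W : ℕ) : ℝ)⁻¹ * 6 := by
        refine mul_le_mul_of_nonneg_left (HIH _) (by positivity)
    _ = 6 * ((sInf W : ℕ) : ℝ)⁻¹ := by ring

/-! ### Schreier family lemmas -/

lemma S_mem_pos : ∀ ξ : Ordinal, ξ < omega1 → ∀ F ∈ SS.S ξ, ∀ m ∈ F, 0 < m := by
  have hsucc : ∀ γ : Ordinal, ∀ F ∈ SS.S (γ + 1), ∀ m ∈ F, 0 < m := by
    intro γ F hF m hm
    rw [SS.succ_def] at hF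
    rcases hF with rfl | ⟨k, Es, hk, _, _, hmin, _⟩
    · simp at hm
    · exact lt_of_lt_of_le hk (hmin m hm)
  intro ξ hξ F hF m hm
  rcases Ordinal.zero_or_succ_or_isSuccLimit ξ with h0 | ⟨β, hβ⟩ | hlim
  · subst h0
    rw [SS.zero_def] at hF
    rcases hF with rfl | ⟨j, hj, rfl⟩
    · simp at hm
    · simp only [Finset.mem_singleton] at hm
      omega
  · have : ξ = β + 1 := by rw [← hβ, Ordinal.add_one_eq_succ]
    subst this
    exact hsucc β F hF m hm
  · rw [SS.lim_def ξ hξ hlim] at hF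
    rcases hF with rfl | ⟨_, j, _, hF⟩
    · simp at hm
    · exact hsucc _ F hF m hm

lemma S_wrap {γ : Ordinal} {E : Finset ℕ} (hE : E ∈ SS.S γ) (hpos : ∀ m ∈ E, 0 < m) :
    E ∈ SS.S (γ + 1) := by
  rw [SS.succ_def]
  by_cases h : E = ∅
  · exact Or.inl h
  · refine Or.inr ⟨1, fun _ => E, one_pos, fun _ => ⟨Finset.nonempty_of_ne_empty h, hE⟩,
      ?_, fun m hm => hpos m hm, ?_⟩
    · intro i j hij
      exact absurd hij (by omega)
    · ext x
      simp

lemma S_chain {ξ : Ordinal} (hξ : ξ < omega1) (hlim : Order.IsSuccLimit ξ) {j l : ℕ} (hjl : j < l) :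
    SS.S (SS.limSeq ξ j + 1) ⊆ SS.S (SS.limSeq ξ l) := by
  induction l with
  | zero => omega
  | succ l ih =>
    by_cases h : j = l
    · subst h
      exact SS.limSeq_nested ξ hξ hlim j
    · have hjl' : j < l := by omega
      intro F hF
      have hF' := ih hjl' hF
      have hpos : ∀ m ∈ F, 0 < m := by
        have hγω : SS.limSeq ξ l < omega1 := (SS.limSeq_lt ξ hξ hlim l).trans hξ
        exact S_mem_pos SS _ hγω F hF'
      exact SS.limSeq_nested ξ hξ hlim l (S_wrap SS hF' hpos)

/-! ### Peeling the series at the first hit -/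

lemma peel_bound {f : ℕ → ℝ} (hf : ∀ n, 0 ≤ f n) {n₀ : ℕ} (h0 : ∀ n < n₀, f n = 0)
    {c : ℝ} (h1 : f n₀ ≤ 1) (h2 : f (n₀ + 1) ≤ 1)
    (h3 : ∀ T' : ℕ, ∑ t ∈ range T', f (n₀ + 2 + t) ≤ c) (T : ℕ) :
    ∑ n ∈ range T, f n ≤ 2 + c := by
  have hle : ∑ n ∈ range T, f n ≤ ∑ n ∈ range (n₀ + 2 + T), f n := by
    refine Finset.sum_le_sum_of_subset_of_nonneg ?_ fun i _ _ => hf i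
    exact Finset.range_subset_range.2 (by omega)
  refine hle.trans ?_
  rw [sum_range_add_split]
  have hfirst : ∑ n ∈ range (n₀ + 2), f n = f n₀ + f (n₀ + 1) := by
    rw [show n₀ + 2 = (n₀ + 1) + 1 from rfl, Finset.sum_range_succ, Finset.sum_range_succ]
    rw [Finset.sum_eq_zero fun n hn => h0 n (Finset.mem_range.1 hn)]
    ring
  rw [hfirst]
  have := h3 T
  linarith
/-- Main estimate: every partial sum of the repeated-averages series over an `S ξ` set
is at most `6`. -/
lemma main_bound : ∀ ξ : Ordinal, ξ < omega1 → ∀ M : Set ℕ, M.Infinite →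
    (∀ m ∈ M, 0 < m) → ∀ F ∈ SS.S ξ, ∀ T : ℕ,
    ∑ n ∈ range T, ∑ i ∈ F, RA SS ξ M n i ≤ 6 := by
  intro ξ
  induction ξ using Ordinal.induction with
  | _ ξ IH =>
    intro hξ M hM hMpos F hF T
    have pk := pack_all SS ξ hξ M hM hMpos
    set f : ℕ → ℝ := fun n => ∑ i ∈ F, RA SS ξ M n i with hfdef
    have hfnn : ∀ n, 0 ≤ f n := fun n => Finset.sum_nonneg fun i _ => (pk n).nonneg i
    have hfle1 : ∀ n, f n ≤ 1 := fun n => by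
      have := sum_le_tmass (pk n).nonneg F
      rw [(pk n).mass] at this
      exact this
    show ∑ n ∈ range T, f n ≤ 6
    rcases Ordinal.zero_or_succ_or_isSuccLimit ξ with h0 | ⟨β, hβ⟩ | hlim
    · -- level zero
      subst h0
      rw [SS.zero_def] at hF
      rcases hF with rfl | ⟨j, hj, rfl⟩
      · simp [hfdef]
      · have hM' : (setOf (· ∈ M)).Infinite := by exact hM
        haveI : DecidablePred fun n => Nat.nth (· ∈ M) n = j := Classical.decPred _
        have hval : ∀ n, f n = if Nat.nth (· ∈ M) n = j then (1:ℝ) else 0 := by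
          intro n
          rw [hfdef]
          simp only [Finset.sum_singleton]
          rw [RA_zero_nth, Finsupp.single_apply]
        calc ∑ n ∈ range T, f n
            = ∑ n ∈ range T, if Nat.nth (· ∈ M) n = j then (1:ℝ) else 0 :=
              Finset.sum_congr rfl fun n _ => hval n
          _ = (((range T).filter fun n => Nat.nth (· ∈ M) n = j).card : ℝ) := by
              rw [Finset.sum_boole]
          _ ≤ 1 := by
              have hcard : ((range T).filter fun n => Nat.nth (· ∈ M) n = j).card ≤ 1 := by
                refine Finset.card_le_one.2 fun a ha b hb => ?_
                rw [Finset.mem_filter] at ha hb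
                exact Nat.nth_injective hM' (ha.2.trans hb.2.symm)
              exact_mod_cast hcard
          _ ≤ 6 := by norm_num
    · -- successor level
      have hξeq : ξ = β + 1 := by rw [← hβ, Ordinal.add_one_eq_succ]
      subst hξeq
      have hβω : β < omega1 := lt_of_le_of_lt (le_self_add (a := β) (b := 1)) hξ
      rw [SS.succ_def] at hF
      rcases hF with rfl | ⟨k, Es, hk, hEs, hblt, hmin, hFE⟩
      · simp [hfdef]
      by_cases hex : ∃ n, f n ≠ 0
      · set n₀ := sInf {n | f n ≠ 0} with hn₀def
        have hn₀mem : f n₀ ≠ 0 := Nat.sInf_mem hex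
        have hzero : ∀ n < n₀, f n = 0 := by
          intro n hn
          by_contra h
          exact absurd (Nat.sInf_le (show n ∈ {n | f n ≠ 0} from h)) (by omega)
        obtain ⟨x₀, hx₀F, hx₀ne⟩ : ∃ i ∈ F, RA SS (β+1) M n₀ i ≠ 0 := by
          by_contra h
          push_neg at h
          exact hn₀mem (Finset.sum_eq_zero h)
        have hx₀supp : x₀ ∈ (RA SS (β+1) M n₀).support := Finsupp.mem_support_iff.2 hx₀ne
        have hπ1 : x₀ < sInf (tailSet SS (β+1) M (n₀+1)) :=
          supp_lt_next SS (β+1) hM hMpos hξ n₀ x₀ hx₀supp _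
            (Nat.sInf_mem (tailSet_infinite SS (β+1) hM (n₀+1)).nonempty)
        have hkx : k ≤ x₀ := hmin x₀ hx₀F
        have hdouble : 2 * sInf (tailSet SS (β+1) M (n₀+1))
            ≤ sInf (tailSet SS (β+1) M (n₀+2)) :=
          sInf_tailSet_double SS (β+1) hM hMpos hξ
            (by rw [Ordinal.add_one_eq_succ]; exact Ordinal.succ_ne_zero β) (n₀+1)
        set M2 := tailSet SS (β+1) M (n₀+2) with hM2def
        have hM2 : M2.Infinite := tailSet_infinite SS (β+1) hM (n₀+2)
        have hM2pos : ∀ m ∈ M2, 0 < m := tailSet_pos SS (β+1) hMpos (n₀+2)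
        have hshift : ∀ t, f (n₀ + 2 + t) = ∑ i ∈ F, RA SS (β+1) M2 t i := by
          intro t
          rw [hfdef]
          exact Finset.sum_congr rfl fun i _ => by rw [RA_shift SS (β+1) hM (n₀+2) t]
        have hdisjE : ∀ a b : Fin k, a ≠ b → Disjoint (Es a) (Es b) := by
          intro a b hab
          have key : ∀ a b : Fin k, a < b → Disjoint (Es a) (Es b) := by
            intro a b h
            rw [Finset.disjoint_left]
            intro x hxa hxb
            exact lt_irrefl x (hblt a b h x hxa x hxb)
          rcases lt_or_gt_of_ne hab with h | h
          · exact key a b h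
          · exact (key b a h).symm
        have hsplit : ∀ x : ℕ →₀ ℝ, ∑ i ∈ F, x i = ∑ l : Fin k, ∑ i ∈ Es l, x i := by
          intro x
          rw [hFE]
          exact Finset.sum_biUnion fun a _ b _ hab => hdisjE a b hab
        have hM2pos' : 0 < sInf M2 := sInf_pos hM2 hM2pos
        have hfar : ∀ T' : ℕ, ∑ t ∈ range T', f (n₀ + 2 + t) ≤ 3 := by
          intro T'
          have h2k : 2 * k ≤ sInf M2 := by omega
          calc ∑ t ∈ range T', f (n₀ + 2 + t)
              = ∑ t ∈ range T', ∑ l : Fin k, ∑ i ∈ Es l, RA SS (β+1) M2 t i := by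
                refine Finset.sum_congr rfl fun t _ => ?_
                rw [hshift t, hsplit]
            _ = ∑ l : Fin k, ∑ t ∈ range T', ∑ i ∈ Es l, RA SS (β+1) M2 t i :=
                Finset.sum_comm
            _ ≤ ∑ _l : Fin k, 6 * ((sInf M2 : ℕ) : ℝ)⁻¹ := by
                refine Finset.sum_le_sum fun l _ => ?_
                exact far_bound SS β hM2 hM2pos hβω (Es l)
                  (fun T'' => IH β (lt_add_one_ord β) hβω M2 hM2 hM2pos (Es l) (hEs l).2 T'') T'
            _ = (k : ℝ) * (6 * ((sInf M2 : ℕ) : ℝ)⁻¹) := by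
                rw [Finset.sum_const, Finset.card_univ, Fintype.card_fin, nsmul_eq_mul]
            _ ≤ 3 := by
                have hpos : (0:ℝ) < ((sInf M2 : ℕ) : ℝ) := by exact_mod_cast hM2pos'
                rw [show (k : ℝ) * (6 * ((sInf M2 : ℕ) : ℝ)⁻¹)
                    = (6 * k) * ((sInf M2 : ℕ) : ℝ)⁻¹ by ring,
                  ← div_eq_mul_inv, div_le_iff₀ hpos]
                have : (2 * k : ℝ) ≤ ((sInf M2 : ℕ) : ℝ) := by exact_mod_cast h2k
                linarith
        have := peel_bound hfnn hzero (hfle1 n₀) (hfle1 (n₀+1)) hfar T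
        linarith
      · push_neg at hex
        rw [Finset.sum_eq_zero fun n _ => hex n]
        norm_num
    · -- limit level
      rw [SS.lim_def ξ hξ hlim] at hF
      rcases hF with rfl | ⟨hFne, j, hjmin, hFmem⟩
      · simp [hfdef]
      by_cases hex : ∃ n, f n ≠ 0
      · set n₀ := sInf {n | f n ≠ 0} with hn₀def
        have hn₀mem : f n₀ ≠ 0 := Nat.sInf_mem hex
        have hzero : ∀ n < n₀, f n = 0 := by
          intro n hn
          by_contra h
          exact absurd (Nat.sInf_le (show n ∈ {n | f n ≠ 0} from h)) (by omega)
        obtain ⟨x₀, hx₀F, hx₀ne⟩ : ∃ i ∈ F, RA SS ξ M n₀ i ≠ 0 := by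
          by_contra h
          push_neg at h
          exact hn₀mem (Finset.sum_eq_zero h)
        have hx₀supp : x₀ ∈ (RA SS ξ M n₀).support := Finsupp.mem_support_iff.2 hx₀ne
        have hπ1 : x₀ < sInf (tailSet SS ξ M (n₀+1)) :=
          supp_lt_next SS ξ hM hMpos hξ n₀ x₀ hx₀supp _
            (Nat.sInf_mem (tailSet_infinite SS ξ hM (n₀+1)).nonempty)
        have hjx : j ≤ x₀ := hjmin x₀ hx₀F
        have hterm : ∀ n, n₀ + 1 ≤ n → f n ≤ 6 * ((sInf (tailSet SS ξ M n) : ℕ) : ℝ)⁻¹ := by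
          intro n hn
          have hW : (tailSet SS ξ M n).Infinite := tailSet_infinite SS ξ hM n
          have hWpos : ∀ m ∈ tailSet SS ξ M n, 0 < m := tailSet_pos SS ξ hMpos n
          have hπn : sInf (tailSet SS ξ M (n₀+1)) ≤ sInf (tailSet SS ξ M n) :=
            sInf_tailSet_mono SS ξ hM hn
          have hjW : j < sInf (tailSet SS ξ M n) := by omega
          have hγ : SS.limSeq ξ (sInf (tailSet SS ξ M n)) < ξ :=
            SS.limSeq_lt ξ hξ hlim _
          have hc : SS.limSeq ξ (sInf (tailSet SS ξ M n)) + 1 < ξ := by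
            rw [Ordinal.add_one_eq_succ]
            exact hlim.succ_lt hγ
          have hRA : RA SS ξ M n = RA SS ξ (tailSet SS ξ M n) 0 := by
            have := RA_shift SS ξ hM n 0
            rwa [Nat.add_zero] at this
          have hval : ∀ i, RA SS ξ M n i
              = ((sInf (tailSet SS ξ M n) : ℕ) : ℝ)⁻¹ *
                ∑ l ∈ range (sInf (tailSet SS ξ M n)),
                  RA SS (SS.limSeq ξ (sInf (tailSet SS ξ M n))) (tailSet SS ξ M n) l i := by
            intro i
            rw [hRA, RA_limit_zero SS hlim _ hc, RA_succ_zero, avg_apply]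
          have hFγ : F ∈ SS.S (SS.limSeq ξ (sInf (tailSet SS ξ M n))) :=
            S_chain SS hξ hlim hjW hFmem
          have hIH := IH _ hγ (hγ.trans hξ) (tailSet SS ξ M n) hW hWpos F hFγ
            (sInf (tailSet SS ξ M n))
          have hinv : (0:ℝ) ≤ ((sInf (tailSet SS ξ M n) : ℕ) : ℝ)⁻¹ := by positivity
          calc f n = ((sInf (tailSet SS ξ M n) : ℕ) : ℝ)⁻¹ *
              ∑ l ∈ range (sInf (tailSet SS ξ M n)), ∑ i ∈ F,
                RA SS (SS.limSeq ξ (sInf (tailSet SS ξ M n))) (tailSet SS ξ M n) l i := by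
                rw [hfdef]
                simp only
                rw [Finset.sum_congr rfl fun i _ => hval i, ← Finset.mul_sum, Finset.sum_comm]
            _ ≤ ((sInf (tailSet SS ξ M n) : ℕ) : ℝ)⁻¹ * 6 :=
                mul_le_mul_of_nonneg_left hIH hinv
            _ = 6 * ((sInf (tailSet SS ξ M n) : ℕ) : ℝ)⁻¹ := by ring
        have hd : ∀ t, 2 * sInf (tailSet SS ξ M t) ≤ sInf (tailSet SS ξ M (t+1)) := fun t =>
          sInf_tailSet_double SS ξ hM hMpos hξ hlim.ne_zero t
        have hπ2 : 4 ≤ sInf (tailSet SS ξ M (n₀+2)) := by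
          have h0 : 0 < sInf (tailSet SS ξ M n₀) :=
            sInf_pos (tailSet_infinite SS ξ hM n₀) (tailSet_pos SS ξ hMpos n₀)
          have h1 := hd n₀
          have h2 : 2 * sInf (tailSet SS ξ M (n₀+1)) ≤ sInf (tailSet SS ξ M (n₀+2)) :=
            hd (n₀+1)
          omega
        have hgeom : ∀ T' : ℕ, ∑ t ∈ range T', f (n₀ + 2 + t) ≤ 3 := by
          intro T'
          have hg := geom_inv_sum_le (fun t => sInf (tailSet SS ξ M (n₀ + 2 + t)))
            (fun t => sInf_pos (tailSet_infinite SS ξ hM _) (tailSet_pos SS ξ hMpos _))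
            (fun t => by
              have := hd (n₀ + 2 + t)
              rwa [show n₀ + 2 + t + 1 = n₀ + 2 + (t+1) by omega] at this) T'
          have hstep : ∑ t ∈ range T', f (n₀ + 2 + t)
              ≤ ∑ t ∈ range T', 6 * ((sInf (tailSet SS ξ M (n₀ + 2 + t)) : ℕ) : ℝ)⁻¹ :=
            Finset.sum_le_sum fun t _ => hterm _ (by omega)
          have hinv4 : ((sInf (tailSet SS ξ M (n₀+2)) : ℕ) : ℝ)⁻¹ ≤ 4⁻¹ := by
            refine inv_anti₀ (by norm_num) ?_
            exact_mod_cast hπ2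
          calc ∑ t ∈ range T', f (n₀ + 2 + t)
              ≤ ∑ t ∈ range T', 6 * ((sInf (tailSet SS ξ M (n₀ + 2 + t)) : ℕ) : ℝ)⁻¹ := hstep
            _ = 6 * ∑ t ∈ range T', ((sInf (tailSet SS ξ M (n₀ + 2 + t)) : ℕ) : ℝ)⁻¹ := by
                rw [Finset.mul_sum]
            _ ≤ 6 * (2 * ((sInf (tailSet SS ξ M (n₀+2)) : ℕ) : ℝ)⁻¹) := by
                have : (0:ℝ) ≤ 6 := by norm_num
                exact mul_le_mul_of_nonneg_left hg this
            _ ≤ 3 := by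
                have := hinv4
                norm_num at this ⊢
                linarith
        have := peel_bound hfnn hzero (hfle1 n₀) (hfle1 (n₀+1)) hgeom T
        linarith
      · push_neg at hex
        rw [Finset.sum_eq_zero fun n _ => hex n]
        norm_num
theorem statement14_aux (ξ : Ordinal) (hξ : ξ < omega1)
    (M : Set ℕ) (hM : M.Infinite) (hMpos : ∀ m ∈ M, 0 < m)
    (F : Finset ℕ) (hF : F ∈ SS.S ξ) :
    ∑ i ∈ F, ∑' n : ℕ, RA SS ξ M n i ≤ 6 := by
  have pk := pack_all SS ξ hξ M hM hMpos
  have hsummable : ∀ i ∈ F, Summable fun n => RA SS ξ M n i := by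
    intro i hiF
    refine summable_of_sum_range_le (c := 6) (fun n => (pk n).nonneg i) fun T => ?_
    calc ∑ n ∈ range T, RA SS ξ M n i
        ≤ ∑ n ∈ range T, ∑ i' ∈ F, RA SS ξ M n i' :=
          Finset.sum_le_sum fun n _ =>
            Finset.single_le_sum (fun i' _ => (pk n).nonneg i') hiF
      _ ≤ 6 := main_bound SS ξ hξ M hM hMpos F hF T
  calc ∑ i ∈ F, ∑' n : ℕ, RA SS ξ M n i
      = ∑' n : ℕ, ∑ i ∈ F, RA SS ξ M n i := (Summable.tsum_finsetSum hsummable).symm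
    _ ≤ 6 := Real.tsum_le_of_sum_range_le
        (fun n => Finset.sum_nonneg fun i _ => (pk n).nonneg i)
        (main_bound SS ξ hξ M hM hMpos F hF)

end WeakSummingProof

/-- Lemma `weaksumming` of the paper. For every `ξ < ω₁`, every
infinite `M`, and every nonempty `F ∈ S_ξ` with `F ⊆ M`:
`∑_{i ∈ F} ∑_n 𝕊^ξ_{M,n}(i) ≤ 6`. -/
theorem statement14 (SS : SchreierSystem) (ξ : Ordinal) (hξ : ξ < omega1)
    (M : Set ℕ) (hM : M.Infinite) (hMpos : ∀ m ∈ M, 0 < m)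
    (F : Finset ℕ) (hF : F ∈ SS.S ξ) (hFne : F.Nonempty) (hFM : ↑F ⊆ M) :
    ∑ i ∈ F, ∑' n : ℕ, RA SS ξ M n i ≤ 6 :=
  statement14_aux SS ξ hξ M hM hMpos F hF

end SchreierPaper
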